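/- arXiv:2007.07958 — 4 statements merged into one kernel-verified Lean document; each statement's English description precedes it below -/
import Mathlib

section
/- Let τ₁,…,τ_M be density matrices with priors p₁,…,p_M summing to 1, and let μ₀ be a density matrix and t ≥ 0. Then the minimum average error probability ε* = min over POVMs {Πᵢ} of (1 − Σᵢ pᵢ tr(τᵢ Πᵢ)) satisfies ε* ≥ Σᵢ pᵢ tr(τᵢ · {pᵢ τᵢ − t μ₀ ≤ 0}) − t. -/
/-! Put `Aᵢ = pᵢτᵢ − tμ₀`. For any `0 ≤ Π ≤ 1`, splitting `Aᵢ` along its eigenprojections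
gives `tr(AᵢΠ) ≤ tr(Aᵢ{Aᵢ > 0})`, and dropping `−t tr(μ₀{Aᵢ > 0}) ≤ 0` leaves
`pᵢ tr(τᵢ{Aᵢ > 0}) = pᵢ(1 − tr(τᵢ{Aᵢ ≤ 0}))`. Taking `Π = Πᵢ` and summing over `i`, the terms
`t tr(μ₀Πᵢ)` add up to `t tr μ₀ = t` and the `pᵢ` to `1`. -/

open ComplexOrder

/-- Orthogonal projection onto the strictly positive eigenspace of a Hermitian matrix. -/
noncomputable def projPos {m : Type*} [Fintype m] [DecidableEq m]
    (A : Matrix m m ℂ) (hA : A.IsHermitian) : Matrix m m ℂ :=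
  ∑ i : m, if 0 < hA.eigenvalues i then
    Matrix.vecMulVec (fun j => hA.eigenvectorBasis i j) (star fun j => hA.eigenvectorBasis i j)
  else 0

/-- Orthogonal projection onto the nonnegative eigenspace of a Hermitian matrix. -/
noncomputable def projNonneg {m : Type*} [Fintype m] [DecidableEq m]
    (A : Matrix m m ℂ) (hA : A.IsHermitian) : Matrix m m ℂ :=
  ∑ i : m, if 0 ≤ hA.eigenvalues i then
    Matrix.vecMulVec (fun j => hA.eigenvectorBasis i j) (star fun j => hA.eigenvectorBasis i j)
  else 0

/-- Orthogonal projection onto the nonpositive eigenspace of a Hermitian matrix. -/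
noncomputable def projNonpos {m : Type*} [Fintype m] [DecidableEq m]
    (A : Matrix m m ℂ) (hA : A.IsHermitian) : Matrix m m ℂ :=
  ∑ i : m, if hA.eigenvalues i ≤ 0 then
    Matrix.vecMulVec (fun j => hA.eigenvectorBasis i j) (star fun j => hA.eigenvectorBasis i j)
  else 0

namespace Matrix

open scoped MatrixOrder

section Trace

variable {m 𝕜 : Type*} [DecidableEq m] [RCLike 𝕜]

theorem posSemidef_one_sub_of_sum_eq_one {ι : Type*} [Fintype ι] [DecidableEq ι]
    {W : ι → Matrix m m 𝕜} (hW : ∀ i, (W i).PosSemidef) (hsum : ∑ i, W i = 1) (i : ι) :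
    (1 - W i).PosSemidef := by
  rw [← hsum, ← Finset.add_sum_erase _ _ (Finset.mem_univ i), add_sub_cancel_left]
  exact posSemidef_sum _ fun j _ => hW j

variable [Fintype m] {B C W : Matrix m m 𝕜}

theorem PosSemidef.trace_mul_nonneg (hB : B.PosSemidef) (hC : C.PosSemidef) :
    0 ≤ (B * C).trace := by
  obtain ⟨X, rfl⟩ := CStarAlgebra.nonneg_iff_eq_star_mul_self.mp hB.nonneg
  rw [star_eq_conjTranspose, mul_assoc, trace_mul_comm]
  exact (hC.mul_mul_conjTranspose_same X).trace_nonneg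

theorem PosSemidef.trace_mul_le_trace (hB : B.PosSemidef) (hW : (1 - W).PosSemidef) :
    (B * W).trace ≤ B.trace := by
  have h := hB.trace_mul_nonneg hW
  rwa [mul_sub, mul_one, trace_sub, sub_nonneg] at h

end Trace

namespace IsHermitian

variable {m : Type*} [Fintype m] [DecidableEq m] {A W : Matrix m m ℂ} (hA : A.IsHermitian)

noncomputable def eigenprojection (i : m) : Matrix m m ℂ :=
  vecMulVec (fun j => hA.eigenvectorBasis i j) (star fun j => hA.eigenvectorBasis i j)

theorem projPos_eq :
    projPos A hA = ∑ i, if 0 < hA.eigenvalues i then hA.eigenprojection i else 0 :=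
  rfl

theorem projNonpos_eq :
    projNonpos A hA = ∑ i, if hA.eigenvalues i ≤ 0 then hA.eigenprojection i else 0 :=
  rfl

theorem posSemidef_eigenprojection (i : m) : (hA.eigenprojection i).PosSemidef :=
  posSemidef_vecMulVec_self_star _

theorem sum_eigenprojection : ∑ i, hA.eigenprojection i = 1 := by
  have hU := mem_unitaryGroup_iff.mp hA.eigenvectorUnitary.2
  ext k l
  have := congrFun (congrFun hU k) l
  simp only [mul_apply, star_apply, eigenvectorUnitary_apply] at this
  simpa [eigenprojection, sum_apply, vecMulVec_apply] using this

theorem mul_eigenprojection (i : m) :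
    A * hA.eigenprojection i = (hA.eigenvalues i : ℂ) • hA.eigenprojection i := by
  rw [eigenprojection, mul_vecMulVec, hA.mulVec_eigenvectorBasis i, ← smul_vecMulVec,
    RCLike.real_smul_eq_coe_smul (K := ℂ)]
  rfl

theorem projPos_add_projNonpos : projPos A hA + projNonpos A hA = 1 := by
  rw [projPos_eq, projNonpos_eq, ← Finset.sum_add_distrib, ← hA.sum_eigenprojection]
  refine Finset.sum_congr rfl fun i _ => ?_
  by_cases h : hA.eigenvalues i ≤ 0
  · rw [if_neg h.not_gt, if_pos h, zero_add]
  · rw [if_pos (not_le.mp h), if_neg h, add_zero]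

theorem posSemidef_projPos : (projPos A hA).PosSemidef := by
  refine posSemidef_sum _ fun i _ => ?_
  split_ifs
  exacts [hA.posSemidef_eigenprojection i, .zero]

theorem posSemidef_mul_projPos : (A * projPos A hA).PosSemidef := by
  rw [projPos_eq, Finset.mul_sum]
  refine posSemidef_sum _ fun i _ => ?_
  split_ifs with h
  · rw [mul_eigenprojection]
    exact (hA.posSemidef_eigenprojection i).smul (by exact_mod_cast h.le)
  · simpa using PosSemidef.zero

theorem posSemidef_neg_mul_projNonpos : (-(A * projNonpos A hA)).PosSemidef := by
  rw [projNonpos_eq, Finset.mul_sum, ← Finset.sum_neg_distrib]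
  refine posSemidef_sum _ fun i _ => ?_
  split_ifs with h
  · rw [mul_eigenprojection, ← neg_smul]
    exact (hA.posSemidef_eigenprojection i).smul (by rw [neg_nonneg]; exact_mod_cast h)
  · simpa using PosSemidef.zero

theorem trace_mul_le_trace_mul_projPos (hW : W.PosSemidef) (hW1 : (1 - W).PosSemidef) :
    (A * W).trace ≤ (A * projPos A hA).trace := by
  have hpos : (A * projPos A hA * W).trace ≤ (A * projPos A hA).trace :=
    hA.posSemidef_mul_projPos.trace_mul_le_trace hW1
  have hnonpos : (A * projNonpos A hA * W).trace ≤ 0 := by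
    have h := hA.posSemidef_neg_mul_projNonpos.trace_mul_nonneg hW
    rwa [neg_mul, trace_neg, neg_nonneg] at h
  calc (A * W).trace
      = (A * projPos A hA * W).trace + (A * projNonpos A hA * W).trace := by
        rw [← trace_add, ← add_mul, ← mul_add, projPos_add_projNonpos, mul_one]
    _ ≤ (A * projPos A hA).trace + 0 := add_le_add hpos hnonpos
    _ = (A * projPos A hA).trace := add_zero _

end IsHermitian

end Matrix

open Matrix in
theorem mul_trace_mul_projNonpos_add_le {m : Type*} [Fintype m] [DecidableEq m]
    {τ μ W : Matrix m m ℂ} {p t : ℝ} (hτ : τ.trace = 1) (hμ : μ.PosSemidef) (ht : 0 ≤ t)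
    (hA : ((p : ℂ) • τ - (t : ℂ) • μ).IsHermitian) (hW : W.PosSemidef)
    (hW1 : (1 - W).PosSemidef) :
    (p : ℂ) * (τ * projNonpos _ hA).trace + p * (τ * W).trace ≤ p + t * (μ * W).trace := by
  have htrace (X : Matrix m m ℂ) :
      (((p : ℂ) • τ - (t : ℂ) • μ) * X).trace = p * (τ * X).trace - t * (μ * X).trace := by
    rw [sub_mul, smul_mul_assoc, smul_mul_assoc, trace_sub, trace_smul, trace_smul, smul_eq_mul,
      smul_eq_mul]
  have hτP : (τ * projPos _ hA).trace = 1 - (τ * projNonpos _ hA).trace := by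
    rw [eq_sub_of_add_eq hA.projPos_add_projNonpos, mul_sub, mul_one, trace_sub, hτ]
  have hμP : 0 ≤ (t : ℂ) * (μ * projPos _ hA).trace :=
    mul_nonneg (by exact_mod_cast ht) (hμ.trace_mul_nonneg hA.posSemidef_projPos)
  have h := hA.trace_mul_le_trace_mul_projPos hW hW1
  rw [htrace, htrace, hτP] at h
  linear_combination h.trans (sub_le_self _ hμP)

/-- Stated for an arbitrary POVM, hence also for the minimum error `ε*`. -/
theorem hn_lower_bound_general {n M : ℕ}
    (τ : Fin M → Matrix (Fin n) (Fin n) ℂ)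
    (hτ : ∀ i, (τ i).PosSemidef ∧ (τ i).trace = 1)
    (p : Fin M → ℝ) (hpsum : ∑ i, p i = 1)
    (μ₀ : Matrix (Fin n) (Fin n) ℂ) (hμ₀ : μ₀.PosSemidef) (hμ₀tr : μ₀.trace = 1)
    (t : ℝ) (ht : 0 ≤ t)
    (hH : ∀ i, ((p i : ℂ) • τ i - (t : ℂ) • μ₀).IsHermitian)
    (Pov : Fin M → Matrix (Fin n) (Fin n) ℂ)
    (hPov : ∀ i, (Pov i).PosSemidef)
    (hPovsum : ∑ i, Pov i = 1) :
    (∑ i, (p i : ℂ) * (τ i * projNonpos ((p i : ℂ) • τ i - (t : ℂ) • μ₀) (hH i)).trace)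
      - (t : ℂ)
    ≤ 1 - ∑ i, (p i : ℂ) * (τ i * Pov i).trace := by
  have hsum := Finset.sum_le_sum fun i (_ : i ∈ Finset.univ) =>
    mul_trace_mul_projNonpos_add_le (hτ i).2 hμ₀ ht (hH i) (hPov i)
      (Matrix.posSemidef_one_sub_of_sum_eq_one hPov hPovsum i)
  have hp : ∑ i, (p i : ℂ) = 1 := by exact_mod_cast hpsum
  have hμ : ∑ i, (t : ℂ) * (μ₀ * Pov i).trace = t := by
    rw [← Finset.mul_sum, ← Matrix.trace_sum, ← Matrix.mul_sum, hPovsum, Matrix.mul_one, hμ₀tr,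
      mul_one]
  rw [Finset.sum_add_distrib, Finset.sum_add_distrib, hp, hμ] at hsum
  rwa [sub_le_sub_iff]

/-- Hayashi–Nagaoka-type lower bound (Corollary 1): for any POVM `{Pov i}`,
`1 − Σᵢ pᵢ tr(τᵢ Povᵢ) ≥ Σᵢ pᵢ tr(τᵢ {pᵢτᵢ − tμ₀ ≤ 0}) − t`; hence the minimum
average error probability satisfies the same bound. -/
theorem hn_lower_bound {n M : ℕ}
    (τ : Fin M → Matrix (Fin n) (Fin n) ℂ)
    (hτ : ∀ i, (τ i).PosSemidef ∧ (τ i).trace = 1)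
    (p : Fin M → ℝ) (hp : ∀ i, 0 ≤ p i) (hpsum : ∑ i, p i = 1)
    (μ₀ : Matrix (Fin n) (Fin n) ℂ) (hμ₀ : μ₀.PosSemidef) (hμ₀tr : μ₀.trace = 1)
    (t : ℝ) (ht : 0 ≤ t)
    (hH : ∀ i, ((p i : ℂ) • τ i - (t : ℂ) • μ₀).IsHermitian)
    (Pov : Fin M → Matrix (Fin n) (Fin n) ℂ)
    (hPov : ∀ i, (Pov i).PosSemidef)
    (hPovsum : ∑ i, Pov i = 1) :
    (∑ i, (p i : ℂ) * (τ i * projNonpos ((p i : ℂ) • τ i - (t : ℂ) • μ₀) (hH i)).trace)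
      - (t : ℂ)
    ≤ 1 - ∑ i, (p i : ℂ) * (τ i * Pov i).trace :=
  hn_lower_bound_general τ hτ p hpsum μ₀ hμ₀ hμ₀tr t ht hH Pov hPov hPovsum
end

section
/- If a POVM {Π₁*,…,Π_M*} satisfies the Holevo–Yuen–Kennedy–Lax conditions with Lagrange operator Λ = Σᵢ pᵢ τᵢ Πᵢ*, then the minimum error probability equals 1 − tr(Λ). -/
/-!
The HYKL operator `Λ` dominates every `p m • τ m`, so for any POVM `E` the gap
`tr Λ - ∑ p m tr(τ m E m) = ∑ tr((Λ - p m • τ m) E m)` is a sum of traces of products of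
positive semidefinite matrices, hence nonnegative. Since `Λ = ∑ p m • τ m Π m*`, the POVM `Π*`
attains the bound `1 - tr Λ`.
-/

open ComplexOrder

namespace Matrix
variable {ι n 𝕜 : Type*} [Fintype ι] [Fintype n] [DecidableEq n] [RCLike 𝕜]

open scoped MatrixOrder in
theorem PosSemidef.trace_mul_nonneg_s7 {A B : Matrix n n 𝕜}
    (hA : A.PosSemidef) (hB : B.PosSemidef) : 0 ≤ (A * B).trace := by
  have hsqrt : (CFC.sqrt B).PosSemidef := nonneg_iff_posSemidef.mp (CFC.sqrt_nonneg B)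
  rw [← CFC.sqrt_mul_sqrt_self B hB.nonneg, ← mul_assoc, trace_mul_cycle]
  simpa only [hsqrt.isHermitian.eq] using
    (hA.mul_mul_conjTranspose_same (CFC.sqrt B)).trace_nonneg

theorem trace_sub_sum_trace_mul {Λ : Matrix n n 𝕜} (c : ι → 𝕜) (ρ E : ι → Matrix n n 𝕜)
    (hE : ∑ i, E i = 1) :
    Λ.trace - ∑ i, c i * (ρ i * E i).trace = ∑ i, ((Λ - c i • ρ i) * E i).trace := by
  simp only [sub_mul, trace_sub, smul_mul, trace_smul, smul_eq_mul, Finset.sum_sub_distrib,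
    ← trace_sum, ← Matrix.mul_sum, hE, mul_one]

theorem sum_trace_mul_le_trace {Λ : Matrix n n 𝕜} {c : ι → 𝕜} {ρ E : ι → Matrix n n 𝕜}
    (hΛ : ∀ i, (Λ - c i • ρ i).PosSemidef) (hE : ∀ i, (E i).PosSemidef) (hsum : ∑ i, E i = 1) :
    ∑ i, c i * (ρ i * E i).trace ≤ Λ.trace := by
  rw [← sub_nonneg, trace_sub_sum_trace_mul c ρ E hsum]
  exact Finset.sum_nonneg fun i _ ↦ (hΛ i).trace_mul_nonneg_s7 (hE i)

end Matrix

theorem hykl_min_error_general {n M : ℕ}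
    (τ : Fin M → Matrix (Fin n) (Fin n) ℂ)
    (p : Fin M → ℝ)
    (Ps : Fin M → Matrix (Fin n) (Fin n) ℂ)
    (hPs : ∀ i, (Ps i).PosSemidef)
    (hPssum : ∑ i, Ps i = 1)
    (Λ : Matrix (Fin n) (Fin n) ℂ)
    (hΛdef : Λ = ∑ i, (p i : ℂ) • (τ i * Ps i))
    (hpos : ∀ m, (Λ - (p m : ℂ) • τ m).PosSemidef) :
    IsLeast {e : ℂ | ∃ Pov : Fin M → Matrix (Fin n) (Fin n) ℂ,
        (∀ i, (Pov i).PosSemidef) ∧ (∑ i, Pov i = 1) ∧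
        e = 1 - ∑ m, (p m : ℂ) * (τ m * Pov m).trace}
      (1 - Λ.trace) := by
  refine ⟨⟨Ps, hPs, hPssum, ?_⟩, ?_⟩
  · simp only [hΛdef, Matrix.trace_sum, Matrix.trace_smul, smul_eq_mul]
  · rintro e ⟨Pov, hPov, hPovsum, rfl⟩
    exact sub_le_sub_left (Matrix.sum_trace_mul_le_trace hpos hPov hPovsum) 1

/-- If a POVM satisfies the Holevo–Yuen–Kennedy–Lax conditions with Lagrange operator
`Λ = Σᵢ pᵢ τᵢ Πᵢ*`, then the minimum error probability equals `1 − tr(Λ)`. -/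
theorem hykl_min_error {n M : ℕ}
    (τ : Fin M → Matrix (Fin n) (Fin n) ℂ)
    (hτ : ∀ i, (τ i).PosSemidef ∧ (τ i).trace = 1)
    (p : Fin M → ℝ) (hp : ∀ i, 0 ≤ p i) (hpsum : ∑ i, p i = 1)
    (Ps : Fin M → Matrix (Fin n) (Fin n) ℂ)
    (hPs : ∀ i, (Ps i).PosSemidef)
    (hPssum : ∑ i, Ps i = 1)
    (Λ : Matrix (Fin n) (Fin n) ℂ)
    (hΛdef : Λ = ∑ i, (p i : ℂ) • (τ i * Ps i))
    (hΛherm : Λ.IsHermitian)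
    (hstat : ∀ m, (Λ - (p m : ℂ) • τ m) * Ps m = 0)
    (hpos : ∀ m, (Λ - (p m : ℂ) • τ m).PosSemidef) :
    IsLeast {e : ℂ | ∃ Pov : Fin M → Matrix (Fin n) (Fin n) ℂ,
        (∀ i, (Pov i).PosSemidef) ∧ (∑ i, Pov i = 1) ∧
        e = 1 - ∑ m, (p m : ℂ) * (τ m * Pov m).trace}
      (1 - Λ.trace) :=
  hykl_min_error_general τ p Ps hPs hPssum Λ hΛdef hpos
end

section
/- For the 2-qubit depolarizing channel W_m = p·I₄/4 + (1−p)|φ_m⟩⟨φ_m| with 0 ≤ p ≤ 1 applied to the Bell code states (M = 2K ≥ 4), the POVM Π_m = (4/M)|φ_m⟩⟨φ_m| satisfies the HYKL optimality conditions, and the minimum average error probability equals 1 − (4 − 3p)/M. -/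
open ComplexOrder

/-- The `M = 2K` generalized Bell vectors in `ℂ⁴`: for `k = 0,…,K−1`,
the vector with index `2k` (the paper's `1+2k`) is `(|00⟩ + e^{2πik/K}|11⟩)/√2`
and the one with index `2k+1` (the paper's `2+2k`) is `(|01⟩ + e^{2πik/K}|10⟩)/√2`. -/
noncomputable def bell (K : ℕ) (m : Fin (2 * K)) : Fin 4 → ℂ :=
  let k : ℕ := m.val / 2
  let ω : ℂ := Complex.exp (2 * Real.pi * Complex.I * k / K)
  if m.val % 2 = 0 then
    ![1 / (Real.sqrt 2 : ℂ), 0, 0, ω / (Real.sqrt 2 : ℂ)]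
  else
    ![0, 1 / (Real.sqrt 2 : ℂ), ω / (Real.sqrt 2 : ℂ), 0]

/-!
Each `Π_m` is a multiple of the rank-one projector `Φ_m = |φ_m⟩⟨φ_m|`, and the Bell vectors form a
tight frame, `∑_m Φ_m = (M/4) I`, because the phases `e^{2πik/K}` sum to zero. Hence
`W_m Π_m = ((4 - 3p)/M) Φ_m`, the Lagrange operator is the scalar `((4 - 3p)/(4M)) I`, and
`Λ - W_m/M = ((1 - p)/M) (I - Φ_m)` is positive semidefinite and annihilates `Π_m`.
Optimality is then weak duality: for any POVM `Q`, `tr((Λ - W_m/M) Q_m) ≥ 0` summed over `m`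
bounds the success probability by `tr Λ = (4 - 3p)/M`, which `Π` attains.
-/

open Matrix Finset

section HYKL

variable {𝕜 n : Type*} [RCLike 𝕜] [Fintype n]

theorem Matrix.isStarProjection_vecMulVec_self_star {v : n → 𝕜} (hv : star v ⬝ᵥ v = 1) :
    IsStarProjection (vecMulVec v (star v)) where
  isIdempotentElem := by rw [IsIdempotentElem, vecMulVec_mul_vecMulVec, hv, one_smul]
  isSelfAdjoint := (posSemidef_vecMulVec_self_star v).isHermitian

open scoped MatrixOrder in
theorem IsStarProjection.posSemidef {P : Matrix n n 𝕜} (hP : IsStarProjection P) :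
    P.PosSemidef :=
  hP.nonneg.posSemidef

variable [DecidableEq n]

open scoped MatrixOrder in
theorem Matrix.PosSemidef.trace_mul_nonneg_s13 {A B : Matrix n n 𝕜} (hA : A.PosSemidef)
    (hB : B.PosSemidef) : 0 ≤ (A * B).trace := by
  obtain ⟨X, rfl⟩ := CStarAlgebra.nonneg_iff_eq_star_mul_self.mp hB.nonneg
  rw [← Matrix.mul_assoc, trace_mul_cycle, star_eq_conjTranspose]
  exact (hA.mul_mul_conjTranspose_same X).trace_nonneg

variable {ι : Type*} [Fintype ι]

theorem Matrix.sum_mul_trace_mul_le_trace (q : ι → 𝕜) {W Q : ι → Matrix n n 𝕜}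
    {Λ : Matrix n n 𝕜} (hgap : ∀ i, (Λ - q i • W i).PosSemidef)
    (hQ : ∀ i, (Q i).PosSemidef) (hQ1 : ∑ i, Q i = 1) :
    ∑ i, q i * (W i * Q i).trace ≤ Λ.trace := calc
  ∑ i, q i * (W i * Q i).trace ≤ ∑ i, (Λ * Q i).trace := sum_le_sum fun i _ => by
    have := (hgap i).trace_mul_nonneg_s13 (hQ i)
    rwa [sub_mul, trace_sub, smul_mul_assoc, trace_smul, smul_eq_mul, sub_nonneg] at this
  _ = Λ.trace := by rw [← trace_sum, ← mul_sum, hQ1, mul_one]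

theorem Matrix.isLeast_one_sub_trace_of_hykl (q : ι → 𝕜) {W P : ι → Matrix n n 𝕜}
    {Λ : Matrix n n 𝕜} (hP : ∀ i, (P i).PosSemidef) (hP1 : ∑ i, P i = 1)
    (hΛ : Λ = ∑ i, q i • (W i * P i)) (hgap : ∀ i, (Λ - q i • W i).PosSemidef) :
    IsLeast {e : 𝕜 | ∃ Q : ι → Matrix n n 𝕜, (∀ i, (Q i).PosSemidef) ∧ ∑ i, Q i = 1 ∧
      e = 1 - ∑ i, q i * (W i * Q i).trace} (1 - Λ.trace) := by
  refine ⟨⟨P, hP, hP1, ?_⟩, ?_⟩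
  · simp only [hΛ, trace_sum, trace_smul, smul_eq_mul]
  · rintro _ ⟨Q, hQ, hQ1, rfl⟩
    exact sub_le_sub_left (sum_mul_trace_mul_le_trace q hgap hQ hQ1) 1

end HYKL

theorem Fin.sum_univ_two_mul {M : Type*} [AddCommMonoid M] (K : ℕ) (f : Fin (2 * K) → M) :
    ∑ m, f m = ∑ k : Fin K, (f ⟨2 * k, by omega⟩ + f ⟨2 * k + 1, by omega⟩) := by
  rw [← (finProdFinEquiv.trans (finCongr (mul_comm K 2))).sum_comp, Fintype.sum_prod_type]
  refine sum_congr rfl fun k _ => ?_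
  rw [Fin.sum_univ_two]
  congr 2 <;> ext
  · simp [finProdFinEquiv]
  · simp [finProdFinEquiv, add_comm]

theorem Complex.sum_exp_two_pi_I_mul_div_eq_zero {K : ℕ} (hK : 2 ≤ K) :
    ∑ k : Fin K, Complex.exp (2 * Real.pi * Complex.I * k / K) = 0 := by
  rw [← (Complex.isPrimitiveRoot_exp K (by omega)).geom_sum_eq_zero (by omega),
    ← Fin.sum_univ_eq_sum_range]
  refine sum_congr rfl fun k _ => ?_
  rw [← Complex.exp_nat_mul]
  ring_nf

theorem Complex.conj_exp_two_pi_I_mul_div_mul_self (K k : ℕ) :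
    starRingEnd ℂ (Complex.exp (2 * Real.pi * Complex.I * k / K)) *
      Complex.exp (2 * Real.pi * Complex.I * k / K) = 1 := by
  rw [Complex.conj_mul', show 2 * Real.pi * Complex.I * k / K
      = ((2 * Real.pi * k / K : ℝ) : ℂ) * Complex.I by push_cast; ring,
    Complex.norm_exp_ofReal_mul_I, Complex.ofReal_one, one_pow]

theorem Complex.ofReal_sqrt_two_mul_self : (Real.sqrt 2 : ℂ) * Real.sqrt 2 = 2 := by
  rw [← Complex.ofReal_mul, Real.mul_self_sqrt zero_le_two, Complex.ofReal_ofNat]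

theorem star_bell_dotProduct_self (K : ℕ) (m : Fin (2 * K)) :
    star (bell K m) ⬝ᵥ bell K m = 1 := by
  have h2 := Complex.ofReal_sqrt_two_mul_self
  have hω := Complex.conj_exp_two_pi_I_mul_div_mul_self K (m / 2)
  unfold bell
  split_ifs <;>
    simp only [dotProduct, Fin.sum_univ_four, Pi.star_apply, RCLike.star_def, cons_val_zero,
      cons_val_one, Matrix.cons_val, map_zero, map_inv₀, map_div₀, Complex.conj_ofReal, one_div,
      mul_zero, add_zero, zero_add] <;>
    grind

theorem sum_vecMulVec_bell {K : ℕ} (hK : 2 ≤ K) :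
    ∑ m, vecMulVec (bell K m) (star (bell K m)) = (((2 * K : ℕ) : ℂ) / 4) • 1 := by
  set ω : Fin K → ℂ := fun k => Complex.exp (2 * Real.pi * Complex.I * k / K)
  -- a pair `2k, 2k + 1` contributes the coherence `ω_k (|11⟩⟨00| + |10⟩⟨01|)` and its adjoint
  set A : Matrix (Fin 4) (Fin 4) ℂ := !![0, 0, 0, 0; 0, 0, 0, 0; 0, 1, 0, 0; 1, 0, 0, 0]
  have hpair (k : Fin K) :
      vecMulVec (bell K ⟨2 * k, by omega⟩) (star (bell K ⟨2 * k, by omega⟩))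
        + vecMulVec (bell K ⟨2 * k + 1, by omega⟩) (star (bell K ⟨2 * k + 1, by omega⟩))
      = (1 / 2 : ℂ) • (1 + ω k • A + starRingEnd ℂ (ω k) • Aᴴ) := by
    have h2 := Complex.ofReal_sqrt_two_mul_self
    have hω := Complex.conj_exp_two_pi_I_mul_div_mul_self K k
    have h0 : 2 * (k : ℕ) % 2 = 0 := by omega
    have h1 : (2 * (k : ℕ) + 1) % 2 = 1 := by omega
    have h0' : 2 * (k : ℕ) / 2 = k := by omega
    have h1' : (2 * (k : ℕ) + 1) / 2 = k := by omega
    ext i j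
    fin_cases i <;> fin_cases j <;>
      simp [-cons_vecMulVec, vecMulVec_apply, bell, h0, h1, h0', h1', ω, A] <;> grind
  have hω : ∑ k, ω k = 0 := Complex.sum_exp_two_pi_I_mul_div_eq_zero hK
  rw [Fin.sum_univ_two_mul, sum_congr rfl fun k _ => hpair k, ← smul_sum, sum_add_distrib,
    sum_add_distrib, ← sum_smul, ← sum_smul, hω, ← map_sum, hω, map_zero, zero_smul, zero_smul,
    add_zero, add_zero, sum_const, card_univ, Fintype.card_fin, ← Nat.cast_smul_eq_nsmul ℂ,
    smul_smul]
  congr 1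
  push_cast
  ring

section DepolarizedFrame

variable {n : Type*} [DecidableEq n]

noncomputable def depolarize (d p : ℂ) (P : Matrix n n ℂ) : Matrix n n ℂ :=
  (p / d) • 1 + (1 - p) • P

theorem smul_one_sub_smul_depolarize (d M p : ℂ) (P : Matrix n n ℂ) :
    ((1 - p + p / d) / M) • 1 - (1 / M) • depolarize d p P = ((1 - p) / M) • (1 - P) := by
  rw [depolarize]
  match_scalars <;> ring

theorem sum_div_smul_eq_one {ι : Type*} [Fintype ι] {d M : ℂ} (hd : d ≠ 0) (hM : M ≠ 0)
    {Φ : ι → Matrix n n ℂ} (hframe : ∑ i, Φ i = (M / d) • 1) : ∑ i, (d / M) • Φ i = 1 := by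
  rw [← smul_sum, hframe, smul_smul, div_mul_div_cancel₀ hM, div_self hd, one_smul]

variable [Fintype n]

theorem depolarize_mul_self (d p : ℂ) {P : Matrix n n ℂ} (hP : IsIdempotentElem P) :
    depolarize d p P * P = (1 - p + p / d) • P := by
  rw [depolarize, add_mul, smul_mul_assoc, smul_mul_assoc, one_mul, hP.eq, ← add_smul, add_comm]

theorem sum_smul_depolarize_mul_smul {ι : Type*} [Fintype ι] {d M : ℂ} (hd : d ≠ 0) (hM : M ≠ 0)
    (p : ℂ) {Φ : ι → Matrix n n ℂ} (hΦ : ∀ i, IsIdempotentElem (Φ i))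
    (hframe : ∑ i, Φ i = (M / d) • 1) :
    ∑ i, (1 / M) • (depolarize d p (Φ i) * ((d / M) • Φ i)) = ((1 - p + p / d) / M) • 1 := by
  simp only [mul_smul_comm, depolarize_mul_self d p (hΦ _), smul_smul]
  rw [← smul_sum, hframe, smul_smul]
  congr 1
  field_simp

end DepolarizedFrame

theorem bell_code_depolarizing_general (K : ℕ) (hK : 2 ≤ K)
    (p : ℝ) (hp1 : p ≤ 1)
    (W Pov : Fin (2 * K) → Matrix (Fin 4) (Fin 4) ℂ)
    (hWdef : ∀ m, W m = ((p : ℂ) / 4) • (1 : Matrix (Fin 4) (Fin 4) ℂ)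
      + (1 - (p : ℂ)) • Matrix.vecMulVec (bell K m) (star (bell K m)))
    (hPovdef : ∀ m, Pov m = (4 / ((2 * K : ℕ) : ℂ)) •
      Matrix.vecMulVec (bell K m) (star (bell K m)))
    (Λ : Matrix (Fin 4) (Fin 4) ℂ)
    (hΛdef : Λ = ∑ m, (1 / ((2 * K : ℕ) : ℂ)) • (W m * Pov m)) :
    (∀ m, (Pov m).PosSemidef) ∧
    (∑ m, Pov m = 1) ∧
    Λ.IsHermitian ∧
    (∀ m, (Λ - (1 / ((2 * K : ℕ) : ℂ)) • W m) * Pov m = 0) ∧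
    (∀ m, (Λ - (1 / ((2 * K : ℕ) : ℂ)) • W m).PosSemidef) ∧
    IsLeast {e : ℂ | ∃ Q : Fin (2 * K) → Matrix (Fin 4) (Fin 4) ℂ,
        (∀ i, (Q i).PosSemidef) ∧ (∑ i, Q i = 1) ∧
        e = 1 - ∑ m, (1 / ((2 * K : ℕ) : ℂ)) * (W m * Q m).trace}
      (1 - (4 - 3 * (p : ℂ)) / ((2 * K : ℕ) : ℂ)) := by
  set M : ℂ := ((2 * K : ℕ) : ℂ)
  have hM : M ≠ 0 := Nat.cast_ne_zero.mpr (by omega)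
  set Φ := fun m => vecMulVec (bell K m) (star (bell K m))
  have hΦ (m) : IsStarProjection (Φ m) :=
    isStarProjection_vecMulVec_self_star (star_bell_dotProduct_self K m)
  have hframe : ∑ m, Φ m = (M / 4) • 1 := sum_vecMulVec_bell hK
  have hΛ : Λ = ((1 - p + p / 4) / M) • 1 := by
    rw [hΛdef, ← sum_smul_depolarize_mul_smul four_ne_zero hM p
      (fun m => (hΦ m).isIdempotentElem) hframe]
    simp only [hWdef, hPovdef, depolarize]
    rfl
  have hgap (m) : Λ - (1 / M) • W m = ((1 - p) / M) • (1 - Φ m) :=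
    hΛ ▸ hWdef m ▸ smul_one_sub_smul_depolarize 4 M p (Φ m)
  have hPov (m) : (Pov m).PosSemidef :=
    hPovdef m ▸ (posSemidef_vecMulVec_self_star _).smul (by positivity)
  have hPov1 : ∑ m, Pov m = 1 :=
    (sum_congr rfl fun m _ => hPovdef m).trans (sum_div_smul_eq_one four_ne_zero hM hframe)
  have hp : (0 : ℂ) ≤ 1 - p := sub_nonneg.mpr (mod_cast hp1)
  have hgapPSD (m) : (Λ - (1 / M) • W m).PosSemidef :=
    hgap m ▸ (hΦ m).one_sub.posSemidef.smul (div_nonneg hp (by positivity))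
  refine ⟨hPov, hPov1, ?_, fun m => ?_, hgapPSD, ?_⟩
  · rw [hΛ]
    exact isHermitian_one.smul (by simp [IsSelfAdjoint, M, Complex.conj_ofReal])
  · rw [hgap, hPovdef, smul_mul_smul, (hΦ m).one_sub_mul_self, smul_zero]
  · convert isLeast_one_sub_trace_of_hykl (fun _ => 1 / M) hPov hPov1 hΛdef hgapPSD using 2
    rw [hΛ, trace_smul, trace_one, Fintype.card_fin, smul_eq_mul]
    push_cast
    field_simp
    ring

/-- For the 2-qubit depolarizing channel `W_m = p I₄/4 + (1−p)|φ_m⟩⟨φ_m|` applied to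
the Bell code (`M = 2K ≥ 4`), the POVM `Π_m = (4/M)|φ_m⟩⟨φ_m|` satisfies the HYKL
optimality conditions, and the minimum average error probability is `1 − (4−3p)/M`. -/
theorem bell_code_depolarizing (K : ℕ) (hK : 2 ≤ K)
    (p : ℝ) (hp0 : 0 ≤ p) (hp1 : p ≤ 1)
    (W Pov : Fin (2 * K) → Matrix (Fin 4) (Fin 4) ℂ)
    (hWdef : ∀ m, W m = ((p : ℂ) / 4) • (1 : Matrix (Fin 4) (Fin 4) ℂ)
      + (1 - (p : ℂ)) • Matrix.vecMulVec (bell K m) (star (bell K m)))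
    (hPovdef : ∀ m, Pov m = (4 / ((2 * K : ℕ) : ℂ)) •
      Matrix.vecMulVec (bell K m) (star (bell K m)))
    (Λ : Matrix (Fin 4) (Fin 4) ℂ)
    (hΛdef : Λ = ∑ m, (1 / ((2 * K : ℕ) : ℂ)) • (W m * Pov m)) :
    (∀ m, (Pov m).PosSemidef) ∧
    (∑ m, Pov m = 1) ∧
    Λ.IsHermitian ∧
    (∀ m, (Λ - (1 / ((2 * K : ℕ) : ℂ)) • W m) * Pov m = 0) ∧
    (∀ m, (Λ - (1 / ((2 * K : ℕ) : ℂ)) • W m).PosSemidef) ∧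
    IsLeast {e : ℂ | ∃ Q : Fin (2 * K) → Matrix (Fin 4) (Fin 4) ℂ,
        (∀ i, (Q i).PosSemidef) ∧ (∑ i, Q i = 1) ∧
        e = 1 - ∑ m, (1 / ((2 * K : ℕ) : ℂ)) * (W m * Q m).trace}
      (1 - (4 - 3 * (p : ℂ)) / ((2 * K : ℕ) : ℂ)) :=
  bell_code_depolarizing_general K hK p hp1 W Pov hWdef hPovdef Λ hΛdef
end

section
/- Let W = block-diag((1−ε)|φ⟩⟨φ|, ε) ∈ ℂ^{5×5} with |φ⟩ ∈ ℂ⁴ a unit vector and 0 < ε < 1, and μ₀ = (1/(4−3ε))·block-diag((1−ε)I₄, ε). Then F(t) := tr(W · {W − t μ₀ ≥ 0}) = 1 for t ≤ 4 − 3ε and F(t) = 0 for t > 4 − 3ε, independently of |φ⟩. -/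
/-!
Write `A = W - t μ₀` and `s = 1 - t / (4 - 3ε)`. Since `|φ⟩⟨φ|` is idempotent and `μ₀` is
scalar on each block, `μ₀ W = W² / (4 - 3ε)`, hence `A W = s W²`. For a unit eigenvector `u` of `A`
with eigenvalue `λ` this gives `λ ⟨u, W u⟩ = s ‖W u‖²`, and both `⟨u, W u⟩` and `‖W u‖²` are
nonnegative because `W ≥ 0`. Over an eigenbasis, `tr (W {A ≥ 0}) = ∑_{λᵢ ≥ 0} ⟨uᵢ, W uᵢ⟩`. If
`s ≥ 0`, the omitted terms with `λᵢ < 0` vanish, so the sum is `tr W = 1`; if `s < 0`, every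
term vanishes because `W uᵢ = 0`.
-/

open ComplexOrder

open Matrix

namespace Matrix

variable {m n R : Type*} [Fintype m] [Fintype n]

lemma trace_mul_vecMulVec [CommSemiring R] (M : Matrix n n R) (a b : n → R) :
    (M * vecMulVec a b).trace = b ⬝ᵥ (M *ᵥ a) := by
  rw [mul_vecMulVec, trace_vecMulVec, dotProduct_comm]

lemma trace_fromBlocks [AddCommMonoid R] (A : Matrix m m R) (B : Matrix m n R)
    (C : Matrix n m R) (D : Matrix n n R) :
    (fromBlocks A B C D).trace = A.trace + D.trace := by
  simp [trace, Fintype.sum_sum_type]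

lemma PosSemidef.fromBlocks_zero {A : Matrix m m ℂ} {D : Matrix n n ℂ}
    (hA : A.PosSemidef) (hD : D.PosSemidef) : (fromBlocks A 0 0 D).PosSemidef := by
  refine .of_dotProduct_mulVec_nonneg
    (hA.isHermitian.fromBlocks (by simp) hD.isHermitian) fun x => ?_
  rw [fromBlocks_mulVec]
  simpa [dotProduct, Fintype.sum_sum_type] using
    add_nonneg (hA.dotProduct_mulVec_nonneg (x ∘ Sum.inl))
      (hD.dotProduct_mulVec_nonneg (x ∘ Sum.inr))

lemma isIdempotentElem_vecMulVec_star {φ : n → ℂ} (hφ : φ ⬝ᵥ star φ = 1) :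
    IsIdempotentElem (vecMulVec φ (star φ)) := by
  rw [IsIdempotentElem, vecMulVec_mul_vecMulVec, dotProduct_comm, hφ, one_smul]

lemma fromBlocks_smul_one_mul_of_isIdempotentElem [DecidableEq m] [DecidableEq n] [CommRing R]
    {P : Matrix m m R} (hP : IsIdempotentElem P) (a b : R) :
    fromBlocks (a • 1) 0 0 (b • 1) * fromBlocks (a • P) 0 0 (b • (1 : Matrix n n R)) =
      fromBlocks (a • P) 0 0 (b • 1) * fromBlocks (a • P) 0 0 (b • 1) := by
  simp only [fromBlocks_multiply, smul_mul_smul_comm, Matrix.one_mul, hP.eq, Matrix.mul_zero,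
    Matrix.zero_mul, add_zero, zero_add]

end Matrix

namespace Matrix.IsHermitian

variable {n : Type*} [Fintype n] [DecidableEq n] {A : Matrix n n ℂ} (hA : A.IsHermitian)

lemma sum_vecMulVec_eigenvectorBasis :
    ∑ i, vecMulVec ⇑(hA.eigenvectorBasis i) (star ⇑(hA.eigenvectorBasis i)) = 1 := by
  have hU := congrFun₂ (Unitary.coe_mul_star_self hA.eigenvectorUnitary)
  ext j k
  simpa [mul_apply, vecMulVec_apply, Matrix.sum_apply] using hU j k

lemma trace_eq_sum_eigenvectorBasis (W : Matrix n n ℂ) :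
    W.trace = ∑ i, star ⇑(hA.eigenvectorBasis i) ⬝ᵥ (W *ᵥ ⇑(hA.eigenvectorBasis i)) := by
  conv_lhs => rw [← W.mul_one, ← hA.sum_vecMulVec_eigenvectorBasis]
  simp only [Matrix.mul_sum, trace_sum, trace_mul_vecMulVec]

lemma trace_mul_projNonneg (W : Matrix n n ℂ) :
    (W * projNonneg A hA).trace = ∑ i, if 0 ≤ hA.eigenvalues i then
      star ⇑(hA.eigenvectorBasis i) ⬝ᵥ (W *ᵥ ⇑(hA.eigenvectorBasis i)) else 0 := by
  simp only [projNonneg, Matrix.mul_sum, trace_sum, apply_ite, Matrix.mul_zero, trace_zero,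
    trace_mul_vecMulVec]

end Matrix.IsHermitian

section

variable {n : Type*} [Fintype n] {A W : Matrix n n ℂ}

lemma eigenvalue_mul_dotProduct_mulVec (hA : A.IsHermitian) (hW : W.IsHermitian) {s : ℂ}
    (hAW : A * W = s • (W * W)) {u : n → ℂ} {μ : ℝ} (hu : A *ᵥ u = μ • u) :
    (μ : ℂ) * (star u ⬝ᵥ (W *ᵥ u)) = s * (star (W *ᵥ u) ⬝ᵥ (W *ᵥ u)) := by
  have hAu : star u ᵥ* A = μ • star u := by
    rw [← hA.eq, ← star_mulVec, hu, star_smul, star_trivial]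
  calc (μ : ℂ) * (star u ⬝ᵥ (W *ᵥ u)) = star u ⬝ᵥ ((A * W) *ᵥ u) := by
        rw [← mulVec_mulVec, dotProduct_mulVec (star u) A, hAu, smul_dotProduct,
          Complex.real_smul]
    _ = s * (star (W *ᵥ u) ⬝ᵥ (W *ᵥ u)) := by
        rw [hAW, smul_mulVec, dotProduct_smul, ← mulVec_mulVec, dotProduct_mulVec (star u) W,
          star_mulVec, hW.eq, smul_eq_mul]

variable {s : ℝ} {u : n → ℂ} {μ : ℝ}

lemma dotProduct_mulVec_eq_zero_of_eigenvalue_neg (hA : A.IsHermitian) (hW : W.PosSemidef)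
    (hs : 0 ≤ s) (hAW : A * W = (s : ℂ) • (W * W)) (hu : A *ᵥ u = μ • u) (hμ : μ < 0) :
    star u ⬝ᵥ (W *ᵥ u) = 0 := by
  have key := eigenvalue_mul_dotProduct_mulVec hA hW.isHermitian hAW hu
  have hμ' : (μ : ℂ) < 0 := by exact_mod_cast hμ
  have h : (μ : ℂ) * (star u ⬝ᵥ (W *ᵥ u)) = 0 := le_antisymm
    (mul_nonpos_of_nonpos_of_nonneg hμ'.le (hW.dotProduct_mulVec_nonneg u))
    (key ▸ mul_nonneg (by exact_mod_cast hs) (dotProduct_star_self_nonneg _))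
  exact (mul_eq_zero.mp h).resolve_left hμ'.ne

lemma dotProduct_mulVec_eq_zero_of_eigenvalue_nonneg (hA : A.IsHermitian) (hW : W.PosSemidef)
    (hs : s < 0) (hAW : A * W = (s : ℂ) • (W * W)) (hu : A *ᵥ u = μ • u) (hμ : 0 ≤ μ) :
    star u ⬝ᵥ (W *ᵥ u) = 0 := by
  have key := eigenvalue_mul_dotProduct_mulVec hA hW.isHermitian hAW hu
  have hs' : (s : ℂ) < 0 := by exact_mod_cast hs
  have h : (s : ℂ) * (star (W *ᵥ u) ⬝ᵥ (W *ᵥ u)) = 0 := le_antisymm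
    (mul_nonpos_of_nonpos_of_nonneg hs'.le (dotProduct_star_self_nonneg _))
    (key ▸ mul_nonneg (by exact_mod_cast hμ) (hW.dotProduct_mulVec_nonneg u))
  rw [dotProduct_star_self_eq_zero.mp ((mul_eq_zero.mp h).resolve_left hs'.ne), dotProduct_zero]

variable [DecidableEq n]

theorem trace_mul_projNonneg_eq_trace (hA : A.IsHermitian) (hW : W.PosSemidef) (hs : 0 ≤ s)
    (hAW : A * W = (s : ℂ) • (W * W)) : (W * projNonneg A hA).trace = W.trace := by
  rw [hA.trace_mul_projNonneg, hA.trace_eq_sum_eigenvectorBasis W]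
  refine Finset.sum_congr rfl fun i _ => ite_eq_left_iff.mpr fun hi => ?_
  exact (dotProduct_mulVec_eq_zero_of_eigenvalue_neg hA hW hs hAW
    (hA.mulVec_eigenvectorBasis i) (not_le.mp hi)).symm

theorem trace_mul_projNonneg_eq_zero (hA : A.IsHermitian) (hW : W.PosSemidef) (hs : s < 0)
    (hAW : A * W = (s : ℂ) • (W * W)) : (W * projNonneg A hA).trace = 0 := by
  rw [hA.trace_mul_projNonneg]
  refine Finset.sum_eq_zero fun i _ => ite_eq_right_iff.mpr fun hi => ?_
  exact dotProduct_mulVec_eq_zero_of_eigenvalue_nonneg hA hW hs hAW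
    (hA.mulVec_eigenvectorBasis i) hi

end

/-- Symmetry of the 2-qubit erasure channel: for `W = diag((1−ε)|φ⟩⟨φ|, ε)` and
`μ₀ = (1/(4−3ε)) diag((1−ε)I₄, ε)`, `F(t) = tr(W {W − tμ₀ ≥ 0})` equals `1` for
`t ≤ 4 − 3ε` and `0` for `t > 4 − 3ε`, independently of `φ`. -/
theorem erasure_symmetric
    (ε : ℝ) (hε0 : 0 < ε) (hε1 : ε < 1)
    (φ : Fin 4 → ℂ) (hφ : ∑ i, φ i * star (φ i) = 1)
    (W μ₀ : Matrix (Fin 4 ⊕ Fin 1) (Fin 4 ⊕ Fin 1) ℂ)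
    (hWdef : W = Matrix.fromBlocks
      ((1 - (ε : ℂ)) • Matrix.vecMulVec φ (star φ)) 0 0
      ((ε : ℂ) • (1 : Matrix (Fin 1) (Fin 1) ℂ)))
    (hμ₀def : μ₀ = (1 / (4 - 3 * (ε : ℂ))) • Matrix.fromBlocks
      ((1 - (ε : ℂ)) • (1 : Matrix (Fin 4) (Fin 4) ℂ)) 0 0
      ((ε : ℂ) • (1 : Matrix (Fin 1) (Fin 1) ℂ)))
    (hH : ∀ t : ℝ, (W - (t : ℂ) • μ₀).IsHermitian) :
    (∀ t : ℝ, t ≤ 4 - 3 * ε →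
      (W * projNonneg (W - (t : ℂ) • μ₀) (hH t)).trace = 1) ∧
    (∀ t : ℝ, 4 - 3 * ε < t →
      (W * projNonneg (W - (t : ℂ) • μ₀) (hH t)).trace = 0) := by
  have hφ' : φ ⬝ᵥ star φ = 1 := hφ
  have hε : 0 < 4 - 3 * ε := by linarith
  have hW : W.PosSemidef := hWdef ▸ PosSemidef.fromBlocks_zero
    ((posSemidef_vecMulVec_self_star φ).smul (by exact_mod_cast (sub_pos.mpr hε1).le))
    (PosSemidef.one.smul (by exact_mod_cast hε0.le))
  have hμ₀W : μ₀ * W = (1 / (4 - 3 * (ε : ℂ))) • (W * W) := by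
    rw [hμ₀def, Matrix.smul_mul, hWdef,
      fromBlocks_smul_one_mul_of_isIdempotentElem (isIdempotentElem_vecMulVec_star hφ')]
  have hAW (t : ℝ) : (W - (t : ℂ) • μ₀) * W = ((1 - t / (4 - 3 * ε) : ℝ) : ℂ) • (W * W) := by
    rw [sub_mul, smul_mul_assoc, hμ₀W]
    push_cast
    module
  have htrW : W.trace = 1 := by
    rw [hWdef, trace_fromBlocks, trace_smul, trace_smul, trace_vecMulVec, hφ', trace_one]
    simp
  refine ⟨fun t ht => ?_, fun t ht => ?_⟩
  · rw [← htrW]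
    exact trace_mul_projNonneg_eq_trace (hH t) hW
      (sub_nonneg.mpr ((div_le_one hε).mpr ht)) (hAW t)
  · exact trace_mul_projNonneg_eq_zero (hH t) hW (sub_neg.mpr ((one_lt_div hε).mpr ht)) (hAW t)
end
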